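/- arXiv:2106.03028 — 2 statements merged into one kernel-verified Lean document; each statement's English description precedes it below -/
import Mathlib

section
/- Let V be a finite set with |V| = n ≥ 1, let N_1, …, N_M : V → A be labelings, and suppose there is a partition of {1,…,M} into clusters such that |diff(N_i, N_j)| ≤ β·n whenever i and j lie in the same cluster, and |diff(N_i, N_j)| ≥ α·n whenever i and j lie in different clusters, where 0 ≤ β < α ≤ 1 are reals. Let 0 < δ ≤ 1 and let u_1, …, u_s be sampled i.i.d. uniformly from V with s ≥ 4·ln(M/δ)/(α−β)². For each pair i, j define Count(i,j) = |{t ∈ {1,…,s} : N_i(u_t) = N_j(u_t)}|. Then with probability at least 1 − δ the following holds simultaneously for all pairs i ≠ j: Count(i,j) ≥ (1 − (α+β)/2)·s if and only if i and j lie in the same cluster. -/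
/-!
Each agreement count `Count(i,j)` is a sum of `s` i.i.d. indicators whose mean is at least `1 - β`
for a pair in the same cluster and at most `1 - α` otherwise. The threshold `1 - (α + β)/2` lies
`(α - β)/2` away from both, so by Hoeffding's inequality a fixed pair is misclassified with
probability at most `exp (-(α - β)² s / 2) ≤ (δ / M)²`, and a union bound over the `M²` ordered
pairs leaves a failure probability of at most `δ² ≤ δ`.
-/

open Finset Real MeasureTheory ProbabilityTheory

lemma cast_card_filter_not {α : Type*} [Fintype α] (P : α → Prop) [DecidablePred P] :
    (#{x | ¬ P x} : ℝ) = Fintype.card α - #{x | P x} := by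
  have := card_filter_add_card_filter_not (s := univ) P
  rw [card_univ] at this
  rw [← this]; push_cast; ring

lemma measureReal_uniformOn_univ_finset {Ω : Type*} [Fintype Ω] [MeasurableSpace Ω]
    [MeasurableSingletonClass Ω] (S : Finset Ω) :
    (uniformOn (Set.univ : Set Ω)).real S = #S / Fintype.card Ω := by
  simp only [measureReal_def, uniformOn_univ, Measure.count_apply_finset, ENNReal.toReal_div,
    ENNReal.toReal_natCast]

lemma card_sub_mul_le_card_filter_forall {Ω ι : Type*} [Fintype Ω] [Fintype ι]
    (Q : ι → Ω → Prop) [∀ i, DecidablePred (Q i)] {b : ℝ}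
    (hQ : ∀ i, (#{ω | ¬ Q i ω} : ℝ) ≤ b) :
    Fintype.card Ω - Fintype.card ι * b ≤ #{ω | ∀ i, Q i ω} := by
  classical
  have hsub : ({ω | ¬ ∀ i, Q i ω} : Finset Ω) ⊆ univ.biUnion fun i => {ω | ¬ Q i ω} := by
    intro ω
    simp
  have hbad : (#{ω | ¬ ∀ i, Q i ω} : ℝ) ≤ Fintype.card ι * b := by
    calc (#{ω | ¬ ∀ i, Q i ω} : ℝ) ≤ ∑ i, (#{ω | ¬ Q i ω} : ℝ) := by
          exact_mod_cast (card_le_card hsub).trans card_biUnion_le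
      _ ≤ Fintype.card ι * b := by
          simpa using sum_le_sum fun i (_ : i ∈ univ) => hQ i
  rw [cast_card_filter_not] at hbad
  linarith

lemma sq_mul_exp_neg_le {M δ a s : ℝ} (hM : 0 ≤ M) (hδ0 : 0 < δ) (hδ1 : δ ≤ 1) (ha : 0 < a)
    (hs : 4 * log (M / δ) / a ≤ s) :
    M ^ 2 * exp (-(a * s / 2)) ≤ δ := by
  rcases hM.eq_or_lt with rfl | hM
  · simp [hδ0.le]
  have hlog : 2 * log (M / δ) ≤ a * s / 2 := by
    rw [div_le_iff₀ ha] at hs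
    linarith
  calc M ^ 2 * exp (-(a * s / 2)) ≤ M ^ 2 * exp (-(2 * log (M / δ))) := by gcongr
    _ = δ ^ 2 := by
      rw [show -(2 * log (M / δ)) = -log (M / δ) + -log (M / δ) by ring, exp_add, exp_neg,
        exp_log (by positivity)]
      field_simp
    _ ≤ δ := by nlinarith

section Sampling

variable {V ι : Type*} [Fintype V] [Nonempty V] [Fintype ι]

theorem measureReal_uniformOn_sum_sub_integral_ge_le [MeasurableSpace V]
    [DiscreteMeasurableSpace V]
    {X : V → ℝ} (hX : ∀ v, X v ∈ Set.Icc 0 1) {ε : ℝ} (hε : 0 ≤ ε) :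
    (uniformOn (Set.univ : Set (ι → V))).real
        {u | ε * Fintype.card ι ≤ ∑ i, (X (u i) - (uniformOn Set.univ)[X])} ≤
      exp (-(2 * ε ^ 2 * Fintype.card ι)) := by
  set μV : Measure V := uniformOn Set.univ
  set μ : Measure (ι → V) := uniformOn Set.univ
  have hμ : μ = Measure.pi fun _ => μV := by
    simpa using uniformOn_pi (ι := ι) (f := fun _ => (Set.univ : Set V))
  have hsubG := hasSubgaussianMGF_of_mem_Icc (μ := μV) (measurable_of_countable X).aemeasurable
    (ae_of_all _ hX)
  have hsubG_eval (i : ι) :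
      HasSubgaussianMGF (fun u : ι → V => X (u i) - μV[X]) ((‖(1:ℝ) - 0‖₊ / 2) ^ 2) μ := by
    have hmap : μ.map (fun u : ι → V => u i) = μV := by
      rw [hμ]; exact (measurePreserving_eval _ i).map_eq
    have h : HasSubgaussianMGF (fun v => X v - μV[X]) ((‖(1:ℝ) - 0‖₊ / 2) ^ 2)
        (μ.map (fun u : ι → V => u i)) := by
      rw [hmap]; exact hsubG
    exact HasSubgaussianMGF.of_map (X := fun v => X v - μV[X])
      (measurable_pi_apply i).aemeasurable h
  have hind : iIndepFun (fun i (u : ι → V) => X (u i) - μV[X]) μ := by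
    rw [hμ]
    exact iIndepFun_pi (μ := fun _ : ι => μV) (X := fun _ v => X v - μV[X])
      fun _ => (measurable_of_countable _).aemeasurable
  convert HasSubgaussianMGF.measure_sum_ge_le_of_iIndepFun hind (s := univ)
    (fun i _ => hsubG_eval i) (ε := ε * Fintype.card ι) (by positivity) using 2
  rcases eq_or_ne (Fintype.card ι : ℝ) 0 with h | h
  · simp [h]
  · simp only [sub_zero, nnnorm_one, one_div, inv_pow, sum_const, card_univ, nsmul_eq_mul,
      NNReal.coe_mul, NNReal.coe_natCast, NNReal.coe_inv, NNReal.coe_pow, NNReal.coe_ofNat]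
    field_simp

variable [DecidableEq ι]

theorem hoeffding_card_upper (P : V → Prop) [DecidablePred P] {p ε : ℝ}
    (hε : 0 ≤ ε) (hP : (#{v | P v} : ℝ) ≤ p * Fintype.card V) :
    (#{u : ι → V | (p + ε) * Fintype.card ι ≤ #{i | P (u i)}} : ℝ) ≤
      Fintype.card V ^ Fintype.card ι * exp (-(2 * ε ^ 2 * Fintype.card ι)) := by
  let _ : MeasurableSpace V := ⊤
  set X : V → ℝ := Set.indicator {v | P v} 1
  have hX (v : V) : X v ∈ Set.Icc 0 1 := by by_cases h : P v <;> simp [X, h]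
  have hmean : (uniformOn Set.univ : Measure V)[X] ≤ p := by
    rw [integral_indicator_one MeasurableSet.of_discrete, ← coe_filter_univ,
      measureReal_uniformOn_univ_finset, div_le_iff₀ (by positivity)]
    exact hP
  have hsub : (({u : ι → V | (p + ε) * Fintype.card ι ≤ #{i | P (u i)}} : Finset _) :
      Set (ι → V)) ⊆ {u | ε * Fintype.card ι ≤ ∑ i, (X (u i) - (uniformOn Set.univ)[X])} := by
    intro u hu
    simp only [coe_filter, mem_univ, true_and, Set.mem_ofPred_eq] at hu ⊢
    have hcount : ∑ i, X (u i) = #{i | P (u i)} := by simp [X, Set.indicator_apply]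
    rw [sum_sub_distrib, sum_const, card_univ, nsmul_eq_mul, hcount]
    nlinarith
  have := (measureReal_mono hsub).trans (measureReal_uniformOn_sum_sub_integral_ge_le hX hε)
  rw [measureReal_uniformOn_univ_finset, Fintype.card_fun, div_le_iff₀ (by positivity)] at this
  push_cast at this
  linarith

theorem hoeffding_card_lower (P : V → Prop) [DecidablePred P] {p ε : ℝ} (hε : 0 ≤ ε)
    (hP : p * Fintype.card V ≤ #{v | P v}) :
    (#{u : ι → V | #{i | P (u i)} ≤ (p - ε) * Fintype.card ι} : ℝ) ≤
      Fintype.card V ^ Fintype.card ι * exp (-(2 * ε ^ 2 * Fintype.card ι)) := by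
  refine le_trans ?_ (hoeffding_card_upper (fun v => ¬ P v) (p := 1 - p) hε
    (by rw [cast_card_filter_not]; linarith))
  refine Nat.cast_le.2 (card_le_card fun u => ?_)
  simp only [mem_filter, mem_univ, true_and]
  intro hu
  rw [cast_card_filter_not fun i => P (u i)]
  linarith

theorem card_misclassified_le {A : Type*} [DecidableEq A] (f g : V → A) (c : Prop)
    [Decidable c] {α β : ℝ} (hβα : β ≤ α)
    (hsame : c → (#{v | f v ≠ g v} : ℝ) ≤ β * Fintype.card V)
    (hdiff : ¬ c → α * Fintype.card V ≤ #{v | f v ≠ g v}) :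
    (#{u : ι → V | ¬((1 - (α + β) / 2) * Fintype.card ι ≤ #{i | f (u i) = g (u i)} ↔ c)} : ℝ) ≤
      Fintype.card V ^ Fintype.card ι * exp (-((α - β) ^ 2 * Fintype.card ι / 2)) := by
  have hε : 0 ≤ (α - β) / 2 := by linarith
  have hexp : (α - β) ^ 2 * Fintype.card ι / 2 = 2 * ((α - β) / 2) ^ 2 * Fintype.card ι := by ring
  have hcompl := cast_card_filter_not fun v => f v = g v
  simp only [← ne_eq] at hcompl
  rw [hexp]
  by_cases hc : c
  · refine le_trans ?_ (hoeffding_card_lower (fun v => f v = g v) (p := 1 - β) hε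
      (by linarith [hsame hc]))
    refine Nat.cast_le.2 (card_le_card fun u => ?_)
    simp only [mem_filter, mem_univ, true_and]
    intro hu
    have : ¬ (1 - (α + β) / 2) * Fintype.card ι ≤ #{i | f (u i) = g (u i)} := by tauto
    linarith
  · refine le_trans ?_ (hoeffding_card_upper (fun v => f v = g v) (p := 1 - α) hε
      (by linarith [hdiff hc]))
    refine Nat.cast_le.2 (card_le_card fun u => ?_)
    simp only [mem_filter, mem_univ, true_and]
    intro hu
    have : (1 - (α + β) / 2) * Fintype.card ι ≤ #{i | f (u i) = g (u i)} := by tauto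
    linarith

end Sampling

theorem stmt_4_general {V A κ : Type*} [Fintype V] [DecidableEq A] [DecidableEq κ]
    (n : ℕ) (hn : 1 ≤ n) (hV : Fintype.card V = n)
    (M : ℕ) (N : Fin M → V → A) (cl : Fin M → κ)
    (α β δ : ℝ) (hβα : β < α) (hδ0 : 0 < δ) (hδ1 : δ ≤ 1)
    (hsame : ∀ i j : Fin M, cl i = cl j →
      ((Finset.univ.filter (fun u : V => N i u ≠ N j u)).card : ℝ) ≤ β * n)
    (hdiff : ∀ i j : Fin M, cl i ≠ cl j →
      α * n ≤ ((Finset.univ.filter (fun u : V => N i u ≠ N j u)).card : ℝ))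
    (s : ℕ) (hs : 4 * Real.log ((M : ℝ) / δ) / (α - β) ^ 2 ≤ (s : ℝ)) :
    1 - δ ≤ ((Finset.univ.filter
        (fun u : Fin s → V => ∀ i j : Fin M, i ≠ j →
          (((1 - (α + β) / 2) * s ≤
              ((Finset.univ.filter (fun t : Fin s => N i (u t) = N j (u t))).card : ℝ)) ↔
            cl i = cl j))).card : ℝ) /
      (n : ℝ) ^ s := by
  subst hV
  have : Nonempty V := Fintype.card_pos_iff.1 hn
  set E := exp (-((α - β) ^ 2 * s / 2))
  have hpair : ∀ ij : Fin M × Fin M, (#{u : Fin s → V | ¬(ij.1 ≠ ij.2 →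
      ((1 - (α + β) / 2) * s ≤ #{t | N ij.1 (u t) = N ij.2 (u t)} ↔ cl ij.1 = cl ij.2))} : ℝ) ≤
      Fintype.card V ^ s * E := by
    rintro ⟨i, j⟩
    have hmis := card_misclassified_le (ι := Fin s) (N i) (N j) (cl i = cl j) hβα.le
      (hsame i j) (hdiff i j)
    rw [Fintype.card_fin] at hmis
    refine le_trans ?_ hmis
    refine Nat.cast_le.2 (card_le_card fun u => ?_)
    simp only [mem_filter, mem_univ, true_and]
    tauto
  have hgood := card_sub_mul_le_card_filter_forall _ hpair
  have hME := sq_mul_exp_neg_le M.cast_nonneg hδ0 hδ1 (pow_pos (sub_pos.2 hβα) 2) hs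
  simp only [Prod.forall, Fintype.card_fun, Fintype.card_prod, Fintype.card_fin] at hgood
  rw [le_div_iff₀ (by positivity)]
  push_cast at hgood
  have hpos : (0 : ℝ) ≤ Fintype.card V ^ s := by positivity
  linarith [mul_le_mul_of_nonneg_right hME hpos]

/-- Under `(α,β)`-clustering, with probability `≥ 1-δ` over
`s ≥ 4 ln(M/δ)/(α-β)²` uniform samples, the count of agreeing samples exceeds the
threshold `(1-(α+β)/2)·s` iff the entities lie in the same cluster. -/
theorem stmt_4 {V A κ : Type*} [Fintype V] [DecidableEq A] [DecidableEq κ]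
    (n : ℕ) (hn : 1 ≤ n) (hV : Fintype.card V = n)
    (M : ℕ) (N : Fin M → V → A) (cl : Fin M → κ)
    (α β δ : ℝ) (hβ0 : 0 ≤ β) (hβα : β < α) (hα1 : α ≤ 1) (hδ0 : 0 < δ) (hδ1 : δ ≤ 1)
    (hsame : ∀ i j : Fin M, cl i = cl j →
      ((Finset.univ.filter (fun u : V => N i u ≠ N j u)).card : ℝ) ≤ β * n)
    (hdiff : ∀ i j : Fin M, cl i ≠ cl j →
      α * n ≤ ((Finset.univ.filter (fun u : V => N i u ≠ N j u)).card : ℝ))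
    (s : ℕ) (hs : 4 * Real.log ((M : ℝ) / δ) / (α - β) ^ 2 ≤ (s : ℝ)) :
    1 - δ ≤ ((Finset.univ.filter
        (fun u : Fin s → V => ∀ i j : Fin M, i ≠ j →
          (((1 - (α + β) / 2) * s ≤
              ((Finset.univ.filter (fun t : Fin s => N i (u t) = N j (u t))).card : ℝ)) ↔
            cl i = cl j))).card : ℝ) /
      (n : ℝ) ^ s :=
  stmt_4_general n hn hV M N cl α β δ hβα hδ0 hδ1 hsame hdiff s hs
end

section
/- Fix an integer n ≥ 1 and a real 0 < α ≤ 1, and set k = ⌈α·n⌉ (so 1 ≤ k ≤ n). Let Q ⊆ {1,…,n} with |Q| = q, and let g : {0,1}^n → Bool be any function that depends only on the coordinates in Q (i.e., g(x) = g(y) whenever x_u = y_u for all u ∈ Q). If the μ_{n,k}-probability of the event {x : g(x) = (x = 0^n)} is at least 2/3, then 3·q·k ≥ n − q + 1. In particular, any such query set correctly distinguishing x = 0^n from weight-⌈αn⌉ vectors with success probability at least 2/3 must have size q = Ω(1/α). -/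
/-- The weight that the distribution `μ_{n,k}` puts on `x ∈ {0,1}^n`:
mass `1/2` on the all-zeros vector and mass `1/(2·C(n,k))` on each vector with
exactly `k` ones. -/
noncomputable def muWeight (n k : ℕ) (x : Fin n → Bool) : ℝ :=
  if x = (fun _ => false) then 1 / 2
  else if (Finset.univ.filter (fun u => x u = true)).card = k then
    1 / (2 * (n.choose k : ℝ))
  else 0

/-- The `μ_{n,k}`-probability of an event `E ⊆ {0,1}^n`. -/
noncomputable def muProb (n k : ℕ) (E : Finset (Fin n → Bool)) : ℝ :=
  ∑ x ∈ E, muWeight n k x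

/-!
A tester `g` reading only the coordinates in `Q` treats every weight-`k` vector supported off `Q`
like `0^n`. If `g` rejects `0^n` it already loses mass `1/2`; if it accepts `0^n` it errs on all
`C(n-q, k)` such vectors. Either way its success is at most `1 - C(n-q,k)/(2 C(n,k))`.
Since `(n-q+1) C(n,k) ≤ (n-q+1) C(n-q,k) + q k C(n,k)`, success `2/3` forces `3 q k ≥ n-q+1`.
-/
open Finset

namespace Nat

theorem succ_mul_choose_succ_eq (N k : ℕ) :
    (N + 1) * (N + 1).choose k = (N + 1) * N.choose k + k * (N + 1).choose k := by
  cases k with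
  | zero => simp
  | succ k =>
    calc (N + 1) * (N + 1).choose (k + 1)
        = (N + 1) * N.choose (k + 1) + (N + 1) * N.choose k := by
          rw [choose_succ_succ', mul_add, add_comm]
      _ = (N + 1) * N.choose (k + 1) + (k + 1) * (N + 1).choose (k + 1) := by
          rw [add_one_mul_choose_eq N k]; ring

theorem succ_mul_choose_add_le (m q k : ℕ) :
    (m + 1) * (m + q).choose k ≤ (m + 1) * m.choose k + q * k * (m + q).choose k := by
  induction q with
  | zero => simp
  | succ q ih =>
    have pascal := succ_mul_choose_succ_eq (m + q) k
    have mono : (m + q).choose k ≤ (m + q + 1).choose k := choose_le_succ _ _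
    rw [← add_assoc]
    nlinarith [Nat.mul_le_mul_left q mono, Nat.mul_le_mul_left (q * k) mono]

theorem sub_add_one_le_three_mul_of_three_mul_choose_le {n q k : ℕ} (hqn : q ≤ n) (hkn : k ≤ n)
    (h : 3 * (n - q).choose k ≤ 2 * n.choose k) : n - q + 1 ≤ 3 * q * k := by
  have key := succ_mul_choose_add_le (n - q) q k
  rw [Nat.sub_add_cancel hqn] at key
  have hpos := choose_pos hkn
  have : (n - q + 1) * n.choose k ≤ 3 * q * k * n.choose k := by nlinarith
  exact Nat.le_of_mul_le_mul_right this hpos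

end Nat

section Distribution

variable {n k : ℕ}

def ones (x : Fin n → Bool) : Finset (Fin n) := univ.filter (fun u => x u = true)

theorem ne_false_of_card_ones_eq (hk : 1 ≤ k) {x : Fin n → Bool} (hx : #(ones x) = k) :
    x ≠ fun _ => false := by
  rintro rfl
  simp [ones] at hx
  omega

theorem card_filter_ones_subset (P : Finset (Fin n)) (k : ℕ) :
    #{x : Fin n → Bool | ones x ⊆ P ∧ #(ones x) = k} = (#P).choose k := by
  rw [← card_powersetCard]
  refine card_bij' (fun x _ => ones x) (fun s _ u => decide (u ∈ s)) ?_ ?_ ?_ ?_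
  · intro x hx
    simpa [mem_powersetCard] using hx
  · intro s hs
    have : ones (fun u => decide (u ∈ s)) = s := by ext u; simp [ones]
    simpa [this, mem_powersetCard] using hs
  · intro x _; funext u; simp [ones]
  · intro s _; ext u; simp [ones]

theorem muWeight_nonneg (x : Fin n → Bool) : 0 ≤ muWeight n k x := by
  unfold muWeight; split_ifs <;> positivity

theorem muWeight_false : muWeight n k (fun _ => false) = 1 / 2 := by simp [muWeight]

theorem muWeight_of_ne_false {x : Fin n → Bool} (hx : x ≠ fun _ => false) :
    muWeight n k x = if #(ones x) = k then 1 / (2 * (n.choose k : ℝ)) else 0 := by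
  simp [muWeight, hx, ones]

theorem muWeight_of_card_ones_eq (hk : 1 ≤ k) {x : Fin n → Bool} (hx : #(ones x) = k) :
    muWeight n k x = 1 / (2 * (n.choose k : ℝ)) := by
  rw [muWeight_of_ne_false (ne_false_of_card_ones_eq hk hx), if_pos hx]

theorem muProb_mono {E F : Finset (Fin n → Bool)} (h : E ⊆ F) : muProb n k E ≤ muProb n k F :=
  sum_le_sum_of_subset_of_nonneg h fun x _ _ => muWeight_nonneg x

/-- A tester reading only the coordinates in `Q` cannot tell these vectors from `0^n`. -/
def blindSet (k : ℕ) (Q : Finset (Fin n)) : Finset (Fin n → Bool) :=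
  {x | ones x ⊆ Qᶜ ∧ #(ones x) = k}

theorem muProb_blindSet (hk : 1 ≤ k) (Q : Finset (Fin n)) :
    muProb n k (blindSet k Q) = (n - #Q).choose k / (2 * (n.choose k : ℝ)) := by
  have hweight : ∀ x ∈ blindSet k Q, muWeight n k x = 1 / (2 * (n.choose k : ℝ)) := fun x hx =>
    muWeight_of_card_ones_eq hk (mem_filter.mp hx).2.2
  rw [muProb, sum_congr rfl hweight, sum_const, blindSet, card_filter_ones_subset, card_compl,
    Fintype.card_fin, nsmul_eq_mul]
  ring

theorem muProb_univ_erase_false (hk : 1 ≤ k) (hkn : k ≤ n) :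
    muProb n k (univ.erase fun _ => false) = 1 / 2 := by
  have hweight : ∀ x ∈ univ.erase fun _ => false,
      muWeight n k x = if #(ones x) = k then 1 / (2 * (n.choose k : ℝ)) else 0 :=
    fun x hx => muWeight_of_ne_false (ne_of_mem_erase hx)
  have hsupp : {x ∈ univ.erase (fun _ => false : Fin n → Bool) | #(ones x) = k} =
      ({x | ones x ⊆ univ ∧ #(ones x) = k} : Finset (Fin n → Bool)) := by
    ext x
    simpa using fun hx => ne_false_of_card_ones_eq hk hx
  have hpos : (0 : ℝ) < n.choose k := by exact_mod_cast Nat.choose_pos hkn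
  rw [muProb, sum_congr rfl hweight, ← sum_filter, sum_const, hsupp, card_filter_ones_subset,
    card_univ, Fintype.card_fin, nsmul_eq_mul]
  field_simp

theorem muProb_univ (hk : 1 ≤ k) (hkn : k ≤ n) : muProb n k univ = 1 := by
  rw [muProb, ← add_sum_erase _ _ (mem_univ fun _ => false), muWeight_false, ← muProb,
    muProb_univ_erase_false hk hkn]
  norm_num

end Distribution

section Tester

variable {n k : ℕ} {Q : Finset (Fin n)} {g : (Fin n → Bool) → Bool}

def correctSet (g : (Fin n → Bool) → Bool) : Finset (Fin n → Bool) :=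
  {x | g x = decide (x = fun _ => false)}

theorem disjoint_blindSet (hk : 1 ≤ k)
    (hg : ∀ x y : Fin n → Bool, (∀ u ∈ Q, x u = y u) → g x = g y)
    (hg0 : g (fun _ => false) = true) : Disjoint (correctSet g) (blindSet k Q) := by
  refine disjoint_left.mpr fun x hcorrect hblind => ?_
  obtain ⟨hoff, hcard⟩ := (mem_filter.mp hblind).2
  have hblank : ∀ u ∈ Q, x u = false := fun u hu => by
    by_contra hxu
    have : u ∈ Qᶜ := hoff (by simpa [ones] using hxu)
    exact mem_compl.mp this hu
  have hgx : g x = true := (hg x _ hblank).trans hg0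
  rw [correctSet, mem_filter, hgx] at hcorrect
  exact ne_false_of_card_ones_eq hk hcard (of_decide_eq_true hcorrect.2.symm)

theorem muProb_correct_le (hk : 1 ≤ k) (hkn : k ≤ n)
    (hg : ∀ x y : Fin n → Bool, (∀ u ∈ Q, x u = y u) → g x = g y) :
    muProb n k (correctSet g) ≤ 1 - (n - #Q).choose k / (2 * (n.choose k : ℝ)) := by
  by_cases hg0 : g (fun _ => false) = true
  · have hunion := sum_union (f := muWeight n k) (disjoint_blindSet hk hg hg0)
    have hle : muProb n k (correctSet g ∪ blindSet k Q) ≤ 1 :=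
      muProb_univ hk hkn ▸ muProb_mono (subset_univ _)
    rw [← muProb_blindSet hk Q]
    unfold muProb at hle ⊢
    linarith
  · have hsub : correctSet g ⊆ univ.erase fun _ => false := fun x hx =>
      mem_erase.mpr ⟨fun h => hg0 (by simpa [correctSet, h] using hx), mem_univ x⟩
    have hpos : (0 : ℝ) < n.choose k := by exact_mod_cast Nat.choose_pos hkn
    have hchoose : ((n - #Q).choose k : ℝ) ≤ n.choose k := by
      exact_mod_cast Nat.choose_le_choose k (Nat.sub_le n #Q)
    have hhalf : ((n - #Q).choose k : ℝ) / (2 * n.choose k) ≤ 1 / 2 := by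
      rw [div_le_iff₀ (by positivity)]
      linarith
    linarith [muProb_mono (k := k) hsub, muProb_univ_erase_false hk hkn]

end Tester

/-- Query lower bound: with `k = ⌈α n⌉`, any tester `g` reading only the coordinates in a
query set `Q` of size `q`, which is correct about whether `x = 0^n` with
`μ_{n,k}`-probability at least `2/3`, must satisfy `3qk ≥ n - q + 1`
(so `q = Ω(1/α)`). -/
theorem stmt_13 (n : ℕ) (hn : 1 ≤ n) (α : ℝ) (hα0 : 0 < α) (hα1 : α ≤ 1)
    (k : ℕ) (hk : k = ⌈α * (n : ℝ)⌉₊)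
    (Q : Finset (Fin n)) (q : ℕ) (hQ : Q.card = q)
    (g : (Fin n → Bool) → Bool)
    (hg : ∀ x y : Fin n → Bool, (∀ u ∈ Q, x u = y u) → g x = g y)
    (hsucc : 2 / 3 ≤ muProb n k (Finset.univ.filter
        (fun x : Fin n → Bool => g x = decide (x = fun _ => false)))) :
    (n : ℝ) - q + 1 ≤ 3 * q * k := by
  have hn' : (0 : ℝ) < n := by exact_mod_cast hn
  have hk1 : 1 ≤ k := by rw [hk, Nat.one_le_ceil_iff]; positivity
  have hkn : k ≤ n := by rw [hk, Nat.ceil_le]; nlinarith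
  have hqn : q ≤ n := hQ ▸ card_le_univ Q |>.trans_eq (Fintype.card_fin n)
  have hpos : (0 : ℝ) < n.choose k := by exact_mod_cast Nat.choose_pos hkn
  have hcorrect := hsucc.trans (muProb_correct_le hk1 hkn hg)
  rw [hQ, le_sub_comm, div_le_iff₀ (by positivity)] at hcorrect
  have hchoose : 3 * (n - q).choose k ≤ 2 * n.choose k := by
    have : 3 * ((n - q).choose k : ℝ) ≤ 2 * n.choose k := by linarith
    exact_mod_cast this
  have hnat := Nat.sub_add_one_le_three_mul_of_three_mul_choose_le hqn hkn hchoose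
  have : ((n - q + 1 : ℕ) : ℝ) ≤ ((3 * q * k : ℕ) : ℝ) := by exact_mod_cast hnat
  push_cast [Nat.cast_sub hqn] at this
  exact this
end
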